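/- Let n ≥ 1, 0 < r < 1, and let δ_1, …, δ_n ∈ ℂ with |δ_i| ≤ r for all i. Then there exists δ ∈ ℂ with |δ| ≤ r such that (1+δ)^n = ∏_{i=1}^n (1+δ_i). -/

import Mathlib

/-!
Write `1 + δᵢ = exp wᵢ` with `wᵢ` the principal logarithm. The principal logarithm of the closed
disk `|u - 1| ≤ r` is the convex set `{x + iy | eˣ + (1 - r²) e⁻ˣ ≤ 2 cos y, |y| ≤ π/2}`
(convexity of `exp` and concavity of `cos` on `[-π/2, π/2]`), so it contains the mean
`w = (∑ wᵢ) / n`, and `δ = exp w - 1` works since `exp (n w) = ∏ exp wᵢ`.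
-/

open Complex Metric Set
open scoped Real

theorem Complex.norm_exp_sub_one_sq (z : ℂ) :
    ‖exp z - 1‖ ^ 2 = Real.exp z.re ^ 2 - 2 * Real.exp z.re * Real.cos z.im + 1 := by
  rw [Complex.sq_norm, normSq_apply]
  simp only [sub_re, sub_im, one_re, one_im, exp_re, exp_im]
  linear_combination Real.exp z.re ^ 2 * Real.sin_sq_add_cos_sq z.im

theorem Complex.norm_exp_sub_one_le_iff {r : ℝ} (hr : 0 ≤ r) (z : ℂ) :
    ‖exp z - 1‖ ≤ r ↔ Real.exp z.re + (1 - r ^ 2) * Real.exp (-z.re) ≤ 2 * Real.cos z.im := by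
  have hexp := Real.exp_pos z.re
  rw [← pow_le_pow_iff_left₀ (norm_nonneg _) hr two_ne_zero, norm_exp_sub_one_sq, Real.exp_neg,
    ← mul_le_mul_iff_of_pos_left hexp]
  constructor <;> intro h <;> field_simp at h ⊢ <;> linarith

theorem convexOn_exp_re_add_mul_exp_neg_re_sub_cos_im {c : ℝ} (hc : 0 ≤ c) :
    ConvexOn ℝ (im ⁻¹' Icc (-(π / 2)) (π / 2))
      (fun z : ℂ => Real.exp z.re + c * Real.exp (-z.re) - 2 * Real.cos z.im) := by
  have hstrip : Convex ℝ (im ⁻¹' Icc (-(π / 2)) (π / 2)) := (convex_Icc _ _).linear_preimage imLm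
  have hexp : ConvexOn ℝ (im ⁻¹' Icc (-(π / 2)) (π / 2)) fun z : ℂ => Real.exp z.re :=
    (convexOn_exp.comp_linearMap reLm).subset (subset_univ _) hstrip
  have hexp_neg : ConvexOn ℝ (im ⁻¹' Icc (-(π / 2)) (π / 2)) fun z : ℂ => Real.exp (-z.re) :=
    (convexOn_exp.comp_linearMap (-reLm)).subset (subset_univ _) hstrip
  have hcos : ConvexOn ℝ (im ⁻¹' Icc (-(π / 2)) (π / 2)) fun z : ℂ => -Real.cos z.im :=
    strictConcaveOn_cos_Icc.concaveOn.neg.comp_linearMap imLm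
  refine ((hexp.add (hexp_neg.smul hc)).add (hcos.smul zero_le_two)).congr fun z _ => ?_
  simp only [Pi.add_apply, smul_eq_mul]
  ring

theorem convex_setOf_norm_exp_sub_one_le {r : ℝ} (hr0 : 0 ≤ r) (hr1 : r ≤ 1) :
    Convex ℝ {z : ℂ | ‖exp z - 1‖ ≤ r ∧ z.im ∈ Icc (-(π / 2)) (π / 2)} := by
  have hc : 0 ≤ 1 - r ^ 2 := by nlinarith
  convert (convexOn_exp_re_add_mul_exp_neg_re_sub_cos_im hc).convex_le 0 using 1
  ext z
  simp [norm_exp_sub_one_le_iff hr0, and_comm]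

theorem Complex.re_pos_of_mem_closedBall_one {r : ℝ} (hr : r < 1) {u : ℂ}
    (hu : u ∈ closedBall (1 : ℂ) r) : 0 < u.re := by
  rw [mem_closedBall, dist_eq_norm] at hu
  have := (abs_le.1 ((abs_re_le_norm (u - 1)).trans hu)).1
  simp only [sub_re, one_re] at this
  linarith

theorem Complex.ne_zero_of_mem_closedBall_one {r : ℝ} (hr : r < 1) {u : ℂ}
    (hu : u ∈ closedBall (1 : ℂ) r) : u ≠ 0 := fun h => by
  simpa [h] using re_pos_of_mem_closedBall_one hr hu

theorem Complex.log_image_closedBall_one {r : ℝ} (hr : r < 1) :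
    log '' closedBall 1 r = {z : ℂ | ‖exp z - 1‖ ≤ r ∧ z.im ∈ Icc (-(π / 2)) (π / 2)} := by
  ext z
  constructor
  · rintro ⟨u, hu, rfl⟩
    have hre := re_pos_of_mem_closedBall_one hr hu
    refine ⟨?_, abs_le.1 (by rw [log_im]; exact abs_arg_le_pi_div_two_iff.2 hre.le)⟩
    rwa [exp_log (ne_zero_of_mem_closedBall_one hr hu), ← dist_eq_norm, ← mem_closedBall]
  · rintro ⟨hz, him_lo, him_hi⟩
    refine ⟨exp z, by rwa [mem_closedBall, dist_eq_norm], log_exp ?_ ?_⟩ <;> linarith [Real.pi_pos]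

theorem Complex.convex_log_image_closedBall_one {r : ℝ} (hr : r < 1) :
    Convex ℝ (log '' closedBall (1 : ℂ) r) := by
  rcases lt_or_ge r 0 with hr0 | hr0
  · rw [closedBall_eq_empty.2 hr0, image_empty]
    exact convex_empty
  · rw [log_image_closedBall_one hr]
    exact convex_setOf_norm_exp_sub_one_le hr0 hr.le

theorem stmt_2_general (n : ℕ) (hn : 1 ≤ n) (r : ℝ) (hr1 : r < 1)
    (δ : Fin n → ℂ) (hδ : ∀ i, ‖δ i‖ ≤ r) :
    ∃ d : ℂ, ‖d‖ ≤ r ∧ (1 + d) ^ n = ∏ i, (1 + δ i) := by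
  have hδ_mem (i : Fin n) : 1 + δ i ∈ closedBall 1 r := by simpa [dist_eq_norm] using hδ i
  have hn0 : (n : ℝ) ≠ 0 := Nat.cast_ne_zero.2 (by omega)
  obtain ⟨u, hu, hlog_u⟩ : (n : ℝ)⁻¹ • ∑ i, log (1 + δ i) ∈ log '' closedBall 1 r := by
    rw [Finset.smul_sum]
    refine (convex_log_image_closedBall_one hr1).sum_mem (fun _ _ => by positivity) ?_
      fun i _ => mem_image_of_mem _ (hδ_mem i)
    simp [hn0]
  refine ⟨u - 1, by simpa [dist_eq_norm] using hu, ?_⟩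
  calc (1 + (u - 1)) ^ n = exp (n * log u) := by
        rw [exp_nat_mul, exp_log (ne_zero_of_mem_closedBall_one hr1 hu)]; ring
    _ = exp (∑ i, log (1 + δ i)) := by
        rw [hlog_u, real_smul, ← mul_assoc]; push_cast
        rw [mul_inv_cancel₀ (by exact_mod_cast hn0), one_mul]
    _ = ∏ i, (1 + δ i) := by
      rw [exp_sum]
      exact Finset.prod_congr rfl fun i _ => exp_log (ne_zero_of_mem_closedBall_one hr1 (hδ_mem i))

theorem stmt_2 (n : ℕ) (hn : 1 ≤ n) (r : ℝ) (hr0 : 0 < r) (hr1 : r < 1)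
    (δ : Fin n → ℂ) (hδ : ∀ i, ‖δ i‖ ≤ r) :
    ∃ d : ℂ, ‖d‖ ≤ r ∧ (1 + d) ^ n = ∏ i, (1 + δ i) :=
  stmt_2_general n hn r hr1 δ hδ
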